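/- Eccentricity is almost preserved by scaled exponential images on the unit sphere: for every μ > 0 there exists δ = δ(μ) > 0 such that the following holds. Let C_ecc > 0 and let Ẽ ⊆ B_δ(0) ⊂ ℝ² be a Borel set satisfying diam_{ℝ²}(Ẽ) ≤ C_ecc · L²(Ẽ)^{1/2}, where L² is the Lebesgue measure on ℝ². Let p ∈ ℝ³ be a unit vector, let ι : ℝ² → p^⊥ ⊂ ℝ³ be a linear isometry, let t ∈ (0,1], and set E_t := f_p(ι(t·Ẽ)). Then diam_{ℝ³}(E_t) ≤ (1+μ) · C_ecc · (μH²(E_t))^{1/2}, where μH² denotes the 2-dimensional Hausdorff measure on ℝ³ and the diameter is taken with respect to the Euclidean distance. -/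

import Mathlib

/-!
For `v, w ⊥ p` with `a = ‖v‖`, `b = ‖w‖`, `s = ⟪v, w⟫`,
`‖f_p v - f_p w‖² = sinc ((a - b) / 2)² (a - b)² + 2 sinc a sinc b (a b - s)`, while
`‖v - w‖² = (a - b)² + 2 (a b - s)`, and both summands are nonnegative. Since
`1 - x² / 6 ≤ sinc x ≤ 1`, `f_p` is `1`-Lipschitz on `p^⊥` and shrinks distances by at most the
factor `c = 1 - δ² / 6` on the ball of radius `δ`; with `δ = min 1 μ`, `1 / c ≤ 1 + μ`.
The eccentricity bound is invariant under the dilation by `t`. Finally, a map that is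
`L`-Lipschitz and shrinks distances by at most `a` on `s` multiplies the diameter by at most `L`
and, through its inverse, the Hausdorff measure by at least `a²`; as `L² ≤ μH²` on `ℝ²`, the
eccentricity constant grows at most by the factor `L / a`.
-/

open MeasureTheory InnerProductSpace
open scoped Pointwise

/-- The exponential map of the unit sphere `S² ⊂ ℝ³` at a unit vector `p`, defined on
`p^⊥ ≅ T_p S²` by `f_p(v) = cos(‖v‖)·p + (sin(‖v‖)/‖v‖)·v` for `v ≠ 0` and `f_p(0) = p`
(the formula below realizes this convention since `c • 0 = 0`). -/
noncomputable def sphereExp (p v : EuclideanSpace ℝ (Fin 3)) : EuclideanSpace ℝ (Fin 3) :=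
  Real.cos ‖v‖ • p + (Real.sin ‖v‖ / ‖v‖) • v

open scoped ENNReal NNReal

namespace Real

theorem one_sub_sq_div_six_le_sinc (x : ℝ) : 1 - x ^ 2 / 6 ≤ sinc x := by
  wlog hx : 0 ≤ x generalizing x
  · simpa [sinc_neg] using this (-x) (by linarith)
  rcases hx.eq_or_lt with rfl | hx
  · simp
  rw [sinc_of_ne_zero hx.ne', le_div_iff₀ hx]
  nlinarith [sin_gt_sub_cube hx]

theorem sinc_mul_self (x : ℝ) : sinc x * x = sin x := by
  rcases eq_or_ne x 0 with rfl | hx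
  · simp
  · rw [sinc_of_ne_zero hx, div_mul_cancel₀ _ hx]

end Real

section SphereExp

open Real

variable {p v w : EuclideanSpace ℝ (Fin 3)}

theorem sphereExp_eq_sinc (p v : EuclideanSpace ℝ (Fin 3)) :
    sphereExp p v = cos ‖v‖ • p + sinc ‖v‖ • v := by
  rcases eq_or_ne v 0 with rfl | hv
  · simp [sphereExp]
  · rw [sphereExp, sinc_of_ne_zero (norm_ne_zero_iff.2 hv)]

theorem inner_sphereExp_sphereExp (hp : ‖p‖ = 1) (hv : ⟪v, p⟫_ℝ = 0) (hw : ⟪w, p⟫_ℝ = 0) :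
    ⟪sphereExp p v, sphereExp p w⟫_ℝ = cos ‖v‖ * cos ‖w‖ + sinc ‖v‖ * sinc ‖w‖ * ⟪v, w⟫_ℝ := by
  have hpp : ⟪p, p⟫_ℝ = 1 := by rw [real_inner_self_eq_norm_sq, hp, one_pow]
  rw [real_inner_comm] at hv hw
  simp only [sphereExp_eq_sinc, inner_add_left, inner_add_right, real_inner_smul_left,
    real_inner_smul_right, hpp, hv, hw, real_inner_comm p]
  ring

theorem norm_sphereExp_sub_sq (hp : ‖p‖ = 1) (hv : ⟪v, p⟫_ℝ = 0) (hw : ⟪w, p⟫_ℝ = 0) :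
    ‖sphereExp p v - sphereExp p w‖ ^ 2 =
      sinc ((‖v‖ - ‖w‖) / 2) ^ 2 * (‖v‖ - ‖w‖) ^ 2
        + 2 * (sinc ‖v‖ * sinc ‖w‖) * (‖v‖ * ‖w‖ - ⟪v, w⟫_ℝ) := by
  set a := ‖v‖
  set b := ‖w‖
  set h := (a - b) / 2
  have hvv : ⟪v, v⟫_ℝ = a ^ 2 := real_inner_self_eq_norm_sq v
  have hww : ⟪w, w⟫_ℝ = b ^ 2 := real_inner_self_eq_norm_sq w
  have hcos : cos (a - b) = 1 - 2 * sin h ^ 2 := by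
    rw [show a - b = 2 * h by ring, cos_two_mul, cos_sq']; ring
  rw [norm_sub_sq_real, ← real_inner_self_eq_norm_sq, ← real_inner_self_eq_norm_sq,
    inner_sphereExp_sphereExp hp hv hv, inner_sphereExp_sphereExp hp hv hw,
    inner_sphereExp_sphereExp hp hw hw, hvv, hww]
  linear_combination (sinc a * a + sin a - 2 * sinc b * b) * sinc_mul_self a
    + (sinc b * b + sin b - 2 * sin a) * sinc_mul_self b
    - 4 * (sinc h * h + sin h) * sinc_mul_self h + sin_sq_add_cos_sq a + sin_sq_add_cos_sq b
    + 2 * cos_sub a b - 2 * hcos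

theorem norm_sphereExp_sub_le (hp : ‖p‖ = 1) (hv : ⟪v, p⟫_ℝ = 0) (hw : ⟪w, p⟫_ℝ = 0) :
    ‖sphereExp p v - sphereExp p w‖ ≤ ‖v - w‖ := by
  have hcs : 0 ≤ ‖v‖ * ‖w‖ - ⟪v, w⟫_ℝ := sub_nonneg.2 (real_inner_le_norm v w)
  have hh : sinc ((‖v‖ - ‖w‖) / 2) ^ 2 ≤ 1 := sq_le_one_iff_abs_le_one _ |>.2 (abs_sinc_le_one _)
  have hvw : sinc ‖v‖ * sinc ‖w‖ ≤ 1 := by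
    have := abs_mul (sinc ‖v‖) (sinc ‖w‖) ▸
      mul_le_one₀ (abs_sinc_le_one ‖v‖) (abs_nonneg _) (abs_sinc_le_one ‖w‖)
    exact (abs_le.1 this).2
  refine (pow_le_pow_iff_left₀ (norm_nonneg _) (norm_nonneg _) two_ne_zero).1 ?_
  rw [norm_sphereExp_sub_sq hp hv hw, norm_sub_sq_real]
  nlinarith [sq_nonneg (‖v‖ - ‖w‖)]

theorem mul_norm_sub_le_norm_sphereExp_sub {δ : ℝ} (hp : ‖p‖ = 1) (hv : ⟪v, p⟫_ℝ = 0)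
    (hw : ⟪w, p⟫_ℝ = 0) (hvδ : ‖v‖ ≤ δ) (hwδ : ‖w‖ ≤ δ) :
    (1 - δ ^ 2 / 6) * ‖v - w‖ ≤ ‖sphereExp p v - sphereExp p w‖ := by
  set c := 1 - δ ^ 2 / 6 with hc_def
  rcases le_or_gt c 0 with hc | hc
  · exact (mul_nonpos_of_nonpos_of_nonneg hc (norm_nonneg _)).trans (norm_nonneg _)
  have hsinc : ∀ y, |y| ≤ δ → c ≤ sinc y := fun y hy => by
    have : y ^ 2 ≤ δ ^ 2 := sq_le_sq.2 (hy.trans (le_abs_self δ))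
    linarith [one_sub_sq_div_six_le_sinc y, hc_def]
  have hcs : 0 ≤ ‖v‖ * ‖w‖ - ⟪v, w⟫_ℝ := sub_nonneg.2 (real_inner_le_norm v w)
  have hh : c ^ 2 ≤ sinc ((‖v‖ - ‖w‖) / 2) ^ 2 := by
    refine pow_le_pow_left₀ hc.le (hsinc _ ?_) 2
    rw [abs_le]
    constructor <;> linarith [norm_nonneg v, norm_nonneg w]
  have hvw : c ^ 2 ≤ sinc ‖v‖ * sinc ‖w‖ := by
    rw [sq]
    exact mul_le_mul (hsinc _ (by rwa [abs_norm])) (hsinc _ (by rwa [abs_norm])) hc.le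
      (hc.le.trans (hsinc _ (by rwa [abs_norm])))
  refine (pow_le_pow_iff_left₀ (by positivity) (norm_nonneg _) two_ne_zero).1 ?_
  rw [norm_sphereExp_sub_sq hp hv hw, mul_pow, norm_sub_sq_real]
  nlinarith [sq_nonneg (‖v‖ - ‖w‖)]

variable {E : Type*} [NormedAddCommGroup E] [InnerProductSpace ℝ E]
  {ι : E →ₗᵢ[ℝ] EuclideanSpace ℝ (Fin 3)}

theorem lipschitzWith_sphereExp_comp (hp : ‖p‖ = 1) (hι : ∀ x, ⟪ι x, p⟫_ℝ = 0) :
    LipschitzWith 1 (fun x => sphereExp p (ι x)) :=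
  LipschitzWith.of_dist_le_mul fun x y => by
    rw [dist_eq_norm, dist_eq_norm, NNReal.coe_one, one_mul, ← ι.norm_map, map_sub]
    exact norm_sphereExp_sub_le hp (hι x) (hι y)

theorem mul_dist_le_dist_sphereExp_comp {δ : ℝ} (hp : ‖p‖ = 1) (hι : ∀ x, ⟪ι x, p⟫_ℝ = 0)
    {x y : E} (hx : ‖x‖ ≤ δ) (hy : ‖y‖ ≤ δ) :
    (1 - δ ^ 2 / 6) * dist x y ≤ dist (sphereExp p (ι x)) (sphereExp p (ι y)) := by
  rw [dist_eq_norm, dist_eq_norm, ← ι.norm_map, map_sub]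
  exact mul_norm_sub_le_norm_sphereExp_sub hp (hι x) (hι y)
    ((ι.norm_map x).trans_le hx) ((ι.norm_map y).trans_le hy)

end SphereExp

theorem EuclideanSpace.volume_le_hausdorffMeasure {ι : Type*} [Fintype ι]
    (s : Set (EuclideanSpace ℝ ι)) : volume s ≤ μH[Fintype.card ι] s := by
  have hpre : WithLp.ofLp '' s = MeasurableEquiv.toLp 2 (ι → ℝ) ⁻¹' s := by
    ext x
    exact ⟨fun ⟨y, hy, hyx⟩ => hyx ▸ hy, fun hx => ⟨_, hx, rfl⟩⟩
  calc volume s = volume (WithLp.ofLp '' s) := by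
        rw [hpre, (PiLp.volume_preserving_toLp ι).measure_preimage_equiv]
    _ = μH[Fintype.card ι] (WithLp.ofLp '' s) := by rw [hausdorffMeasure_pi_real]
    _ ≤ μH[Fintype.card ι] s := by
        simpa using (PiLp.lipschitzWith_ofLp 2 fun _ : ι => ℝ).hausdorffMeasure_image_le
          (d := Fintype.card ι) (Nat.cast_nonneg _) s

theorem le_hausdorffMeasure_image_of_le_mul_dist {X Y : Type*} [MetricSpace X]
    [MeasurableSpace X] [BorelSpace X] [MetricSpace Y] [MeasurableSpace Y] [BorelSpace Y]
    {g : X → Y} {s : Set X} {K : ℝ≥0} {d : ℝ} (hd : 0 ≤ d)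
    (h : ∀ x ∈ s, ∀ y ∈ s, dist x y ≤ K * dist (g x) (g y)) :
    μH[d] s ≤ (K : ℝ≥0∞) ^ d * μH[d] (g '' s) := by
  rcases s.eq_empty_or_nonempty with rfl | ⟨x₀, -⟩
  · simp
  have : Nonempty X := ⟨x₀⟩
  have hinj : Set.InjOn g s := fun x hx y hy hxy =>
    dist_le_zero.1 (by simpa [hxy] using h x hx y hy)
  have hinv : Set.LeftInvOn (Function.invFunOn g s) g s := hinj.leftInvOn_invFunOn
  have hlip : LipschitzOnWith K (Function.invFunOn g s) (g '' s) := by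
    refine LipschitzOnWith.of_dist_le_mul ?_
    rintro _ ⟨x, hx, rfl⟩ _ ⟨y, hy, rfl⟩
    rw [hinv hx, hinv hy]
    exact h x hx y hy
  simpa [hinv.image_image] using hlip.hausdorffMeasure_image_le hd

theorem diam_smul_le_mul_sqrt_volume {s : Set (EuclideanSpace ℝ (Fin 2))} {C t : ℝ}
    (ht : 0 ≤ t) (hs : Metric.diam s ≤ C * √(volume s).toReal) :
    Metric.diam (t • s) ≤ C * √(volume (t • s)).toReal := by
  have hvol : √(volume (t • s)).toReal = t * √(volume s).toReal := by
    rw [Measure.addHaar_smul, finrank_euclideanSpace_fin, ENNReal.toReal_mul,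
      ENNReal.toReal_ofReal (by positivity), abs_pow, abs_of_nonneg ht,
      Real.sqrt_mul (by positivity), Real.sqrt_sq ht]
  rw [diam_smul₀, hvol, Real.norm_of_nonneg ht]
  calc t * Metric.diam s ≤ t * (C * √(volume s).toReal) := mul_le_mul_of_nonneg_left hs ht
    _ = C * (t * √(volume s).toReal) := by ring

theorem diam_image_le_of_lipschitzOnWith_of_mul_dist_le {Y : Type*} [MetricSpace Y]
    [MeasurableSpace Y] [BorelSpace Y] {g : EuclideanSpace ℝ (Fin 2) → Y}
    {s : Set (EuclideanSpace ℝ (Fin 2))} {L : ℝ≥0} {a C : ℝ} (ha : 0 < a) (hC : 0 ≤ C)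
    (hs : Bornology.IsBounded s) (hecc : Metric.diam s ≤ C * √(volume s).toReal)
    (hup : LipschitzOnWith L g s) (hlow : ∀ x ∈ s, ∀ y ∈ s, a * dist x y ≤ dist (g x) (g y)) :
    Metric.diam (g '' s) ≤ L / a * C * √(μH[2] (g '' s)).toReal := by
  set M := μH[2] (g '' s)
  have hs_fin : μH[2] s ≠ ⊤ := by simpa using (hs.measure_lt_top (μ := μH[((2 : ℕ) : ℝ)])).ne
  have hM : M ≠ ⊤ := ne_top_of_le_ne_top (ENNReal.mul_ne_top (by simp) hs_fin)
    (hup.hausdorffMeasure_image_le zero_le_two)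
  have hvol : volume s ≤ ENNReal.ofReal (a⁻¹ ^ 2) * M := by
    have hK : ∀ x ∈ s, ∀ y ∈ s, dist x y ≤ (a⁻¹).toNNReal * dist (g x) (g y) := by
      intro x hx y hy
      rw [Real.coe_toNNReal _ (inv_nonneg.2 ha.le), le_inv_mul_iff₀ ha]
      exact hlow x hx y hy
    calc volume s ≤ μH[2] s := by simpa using EuclideanSpace.volume_le_hausdorffMeasure s
      _ ≤ _ := le_hausdorffMeasure_image_of_le_mul_dist zero_le_two hK
      _ = ENNReal.ofReal (a⁻¹ ^ 2) * M := by
        rw [ENNReal.ofReal_pow (inv_nonneg.2 ha.le), ← ENNReal.rpow_two]; rfl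
  have hsqrt : √(volume s).toReal ≤ a⁻¹ * √M.toReal := by
    rw [Real.sqrt_le_left (by positivity), mul_pow, Real.sq_sqrt ENNReal.toReal_nonneg]
    have := ENNReal.toReal_mono (ENNReal.mul_ne_top ENNReal.ofReal_ne_top hM) hvol
    rwa [ENNReal.toReal_mul, ENNReal.toReal_ofReal (by positivity)] at this
  calc Metric.diam (g '' s) ≤ L * Metric.diam s := by
        refine Metric.diam_le_of_forall_dist_le (by positivity) ?_
        rintro _ ⟨x, hx, rfl⟩ _ ⟨y, hy, rfl⟩
        exact (hup.dist_le_mul x hx y hy).trans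
          (mul_le_mul_of_nonneg_left (Metric.dist_le_diam_of_mem hs hx hy) L.coe_nonneg)
    _ ≤ L * (C * (a⁻¹ * √M.toReal)) := by gcongr; exact hecc.trans (by gcongr)
    _ = L / a * C * √M.toReal := by ring

/-- **Eccentricity is almost preserved by scaled exponential images on the unit sphere.**
For every `μ > 0` there exists `δ = δ(μ) > 0` such that: for every `C_ecc > 0` and every
Borel set `Ẽ ⊆ B_δ(0) ⊂ ℝ²` with `diam(Ẽ) ≤ C_ecc · L²(Ẽ)^{1/2}`, every unit vector
`p ∈ ℝ³`, every linear isometry `ι : ℝ² → p^⊥ ⊂ ℝ³`, and every `t ∈ (0,1]`, the set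
`E_t := f_p(ι(t·Ẽ))` satisfies `diam_{ℝ³}(E_t) ≤ (1+μ)·C_ecc·(μH²(E_t))^{1/2}`. -/
theorem eccentricity_almost_preserved (μ : ℝ) (hμ : 0 < μ) :
    ∃ δ > 0,
      ∀ Cecc : ℝ, 0 < Cecc →
      ∀ Et : Set (EuclideanSpace ℝ (Fin 2)), MeasurableSet Et →
        Et ⊆ Metric.ball 0 δ →
        Metric.diam Et ≤ Cecc * Real.sqrt (volume Et).toReal →
      ∀ p : EuclideanSpace ℝ (Fin 3), ‖p‖ = 1 →
      ∀ ι : EuclideanSpace ℝ (Fin 2) →ₗᵢ[ℝ] EuclideanSpace ℝ (Fin 3),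
        (∀ v, ⟪ι v, p⟫_ℝ = 0) →
      ∀ t : ℝ, t ∈ Set.Ioc (0 : ℝ) 1 →
        Metric.diam (sphereExp p '' (ι '' (t • Et))) ≤
          (1 + μ) * Cecc *
            Real.sqrt (μH[2] (sphereExp p '' (ι '' (t • Et)))).toReal := by
  have hδ₀ : 0 < min 1 μ := lt_min one_pos hμ
  refine ⟨min 1 μ, hδ₀, fun Cecc hC Et _ hEt hecc p hp ι hι t ⟨ht₀, ht₁⟩ => ?_⟩
  have hδ₁ : min 1 μ ≤ 1 := min_le_left 1 μ
  have hδμ : min 1 μ ≤ μ := min_le_right 1 μ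
  have hc : 0 < 1 - min 1 μ ^ 2 / 6 := by nlinarith
  have hcμ : 1 / (1 - min 1 μ ^ 2 / 6) ≤ 1 + μ := by
    rw [div_le_iff₀ hc]
    nlinarith [mul_le_mul_of_nonneg_left hδμ hδ₀.le]
  have hs : t • Et ⊆ Metric.ball 0 (min 1 μ) := (Set.smul_set_mono hEt).trans
    (balanced_ball_zero t (by rwa [Real.norm_of_nonneg ht₀.le]))
  rw [Set.image_image]
  refine (diam_image_le_of_lipschitzOnWith_of_mul_dist_le hc hC.le
    (Metric.isBounded_ball.subset hs) (diam_smul_le_mul_sqrt_volume ht₀.le hecc)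
    (lipschitzWith_sphereExp_comp hp hι).lipschitzOnWith fun x hx y hy =>
      mul_dist_le_dist_sphereExp_comp hp hι (mem_ball_zero_iff.1 (hs hx)).le
        (mem_ball_zero_iff.1 (hs hy)).le).trans ?_
  rw [NNReal.coe_one]
  gcongr
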